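/- Let q be an odd prime power and let F = {E₀, …, E_q} be a partition of the point set of PG(3,q) into q+1 pairwise disjoint elliptic quadrics such that no plane of PG(3,q) is tangent to two distinct members of F. For 0 ≤ i ≤ q let S_i be the set of lines of the Klein quadric Q⁺(5,q) corresponding, under the Klein correspondence, to the pencils of tangent lines of E_i at its points (so each S_i is a 1-system of Q⁺(5,q)). Then no plane (generator) of Q⁺(5,q) contains two lines of ∪_{i=0}^{q} S_i. -/

import Mathlib

open Module

section PolarDefs

variable {F V : Type*} [Field F] [AddCommGroup V] [Module F V]

/-- A submodule is totally singular for a quadratic form: the form vanishes on it.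
(Projective dimension of a `k`-dimensional submodule is `k - 1`.) -/
def TotSingQ (Q : QuadraticForm F V) (W : Submodule F V) : Prop :=
  ∀ v ∈ W, Q v = 0

/-- Non-degeneracy of a quadratic form: the radical of the quadric is trivial. -/
def QuadNondeg (Q : QuadraticForm F V) : Prop :=
  ∀ v : V, Q v = 0 → (∀ w : V, QuadraticMap.polar (⇑Q) v w = 0) → v = 0

/-- A submodule is totally isotropic for a bilinear form. -/
def TotIsoB (B : LinearMap.BilinForm F V) (W : Submodule F V) : Prop :=
  ∀ v ∈ W, ∀ w ∈ W, B v w = 0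

/-- The maximal (vector-space) dimension of a subspace satisfying `iso` is `r`:
this is the rank (Witt index) of the polar space whose totally
isotropic/singular subspaces are described by `iso`. -/
def MaxIsoDim (iso : Submodule F V → Prop) (r : ℕ) : Prop :=
  (∃ W, iso W ∧ finrank F ↥W = r) ∧ ∀ W, iso W → finrank F ↥W ≤ r

/-- `R` is an `m`-regular system with respect to `(k - 1)`-dimensional projective subspaces
(i.e. `k`-dimensional vector subspaces) of the polar space of rank `d` whose totally
isotropic/singular subspaces are described by `iso`: `R` is a set of generators
(totally isotropic `d`-dimensional subspaces) such that every totally isotropic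
`k`-dimensional subspace lies on exactly `m` members of `R`. -/
def IsRegSys (iso : Submodule F V → Prop) (d k : ℕ) (R : Set (Submodule F V)) (m : ℕ) : Prop :=
  (∀ G ∈ R, iso G ∧ finrank F ↥G = d) ∧
    ∀ W : Submodule F V, iso W → finrank F ↥W = k → {G ∈ R | W ≤ G}.ncard = m

/-- The polar space described by `iso`, of rank `d`, has an `m`-regular system with
respect to `(k-1)`-dimensional projective subspaces. -/
def HasRegSys (iso : Submodule F V → Prop) (d k m : ℕ) : Prop :=
  ∃ R, IsRegSys iso d k R m

/-- A hemisystem with respect to `(k-1)`-spaces: a regular system containing exactly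
half of all the generators. -/
def IsHemisys (iso : Submodule F V → Prop) (d k : ℕ) (R : Set (Submodule F V)) : Prop :=
  (∃ m, IsRegSys iso d k R m) ∧
    2 * R.ncard = {G : Submodule F V | iso G ∧ finrank F ↥G = d}.ncard

end PolarDefs

/-- A (possibly Hermitian) sesquilinear form with respect to the field
automorphism `σ`: additive in both arguments, linear in the first one,
`σ`-semilinear in the second one, and conjugate-symmetric. -/
structure SesquiForm (E : Type*) [Field E] (σ : E → E) (V : Type*) [AddCommGroup V]
    [Module E V] where
  toFun : V → V → E
  add_left : ∀ x y z, toFun (x + y) z = toFun x z + toFun y z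
  smul_left : ∀ (c : E) (x y : V), toFun (c • x) y = c * toFun x y
  add_right : ∀ x y z, toFun x (y + z) = toFun x y + toFun x z
  smul_right : ∀ (c : E) (x y : V), toFun x (c • y) = σ c * toFun x y
  conj_symm : ∀ x y, toFun y x = σ (toFun x y)

section HermDefs

variable {E V : Type*} [Field E] {σ : E → E} [AddCommGroup V] [Module E V]

/-- Non-degeneracy of a sesquilinear form. -/
def SesquiForm.Nondeg (B : SesquiForm E σ V) : Prop :=
  ∀ v : V, (∀ w : V, B.toFun v w = 0) → v = 0

/-- A submodule is totally isotropic for a sesquilinear form. -/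
def TotIsoH (B : SesquiForm E σ V) (W : Submodule E V) : Prop :=
  ∀ v ∈ W, ∀ w ∈ W, B.toFun v w = 0

end HermDefs

/-!
Let `G` be a generator containing the Klein image of the pencil of tangents to `E i` at a point
`x`. Any such line of `Q⁺(5,q)` contains the images of two distinct tangent lines at `x`. If `G`
is the Latin plane of a point `P`, these two lines both pass through `x` and `P`, so `x = P`,
and the partition gives `i`. If `G` is the Greek plane of a plane `π`, then `π` is spanned by
two tangent lines at `x`, so it is the tangent plane `x^⊥` of `E i`, which meets the elliptic
quadric in `x` alone; as no plane is tangent to two members of the partition, this gives `i`,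
and then `x`. Finally a line of the Klein quadric is determined by the lines of `PG(3,q)` whose
images it contains.
-/

open Submodule QuadraticMap

section Subspaces

variable {K V : Type*} [Field K] [AddCommGroup V] [Module K V]

theorem Submodule.exists_ne_zero_eq_span_singleton {x : Submodule K V} (hx : finrank K x = 1) :
    ∃ v ≠ 0, x = K ∙ v := by
  have hx0 : x ≠ ⊥ := by
    rintro rfl
    simp at hx
  obtain ⟨v, hv, hv0⟩ := exists_mem_ne_zero_of_ne_bot hx0
  exact ⟨v, hv0, eq_span_singleton_of_mem_of_finrank_eq_one hx hv hv0⟩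

theorem Submodule.exists_span_singleton_ne {A : Submodule K V} (hA : finrank K A = 2) :
    ∃ u ∈ A, ∃ u' ∈ A, u ≠ 0 ∧ u' ≠ 0 ∧ K ∙ u ≠ K ∙ u' := by
  have hA0 : A ≠ ⊥ := by
    rintro rfl
    simp at hA
  obtain ⟨u, hu, hu0⟩ := exists_mem_ne_zero_of_ne_bot hA0
  have hlt : K ∙ u < A := by
    refine lt_of_le_of_ne ((span_singleton_le_iff_mem u A).2 hu) fun h => ?_
    rw [← h, finrank_span_singleton hu0] at hA
    omega
  obtain ⟨u', hu', hu'u⟩ := SetLike.exists_of_lt hlt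
  refine ⟨u, hu, u', hu', hu0, ?_, fun h => hu'u (h ▸ mem_span_singleton_self u')⟩
  rintro rfl
  exact hu'u (zero_mem _)

theorem Submodule.sup_eq_of_ne_of_finrank_eq_succ [FiniteDimensional K V]
    {A B C : Submodule K V} {n : ℕ} (hA : finrank K A = n) (hB : finrank K B = n)
    (hC : finrank K C = n + 1) (hAC : A ≤ C) (hBC : B ≤ C) (hAB : A ≠ B) : A ⊔ B = C := by
  have hlt : A < A ⊔ B := by
    refine lt_of_le_of_ne le_sup_left fun h => hAB ?_
    exact (eq_of_le_of_finrank_le (h ▸ le_sup_right) (by rw [hA, hB])).symm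
  have := finrank_lt_finrank_of_lt hlt
  exact eq_of_le_of_finrank_le (sup_le hAC hBC) (by omega)

end Subspaces

section Quadric

variable {K V : Type*} [Field K] [AddCommGroup V] [Module K V] {Q : QuadraticForm K V}

def singularPoints (Q : QuadraticForm K V) : Set (Submodule K V) :=
  {p | finrank K p = 1 ∧ TotSingQ Q p}

/-- In `PG(3,q)` (`finrank K V = 4`) these are exactly the elliptic quadrics. -/
def IsEllipticQuadric (E : Set (Submodule K V)) : Prop :=
  ∃ Q : QuadraticForm K V, QuadNondeg Q ∧ MaxIsoDim (TotSingQ Q) 1 ∧ E = singularPoints Q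

theorem IsEllipticQuadric.finrank_eq_one {E : Set (Submodule K V)} (hE : IsEllipticQuadric E)
    {x : Submodule K V} (hx : x ∈ E) : finrank K x = 1 := by
  obtain ⟨Q, -, -, rfl⟩ := hE
  exact hx.1

theorem span_singleton_mem_singularPoints {v : V} (hv : v ≠ 0) (hQv : Q v = 0) :
    K ∙ v ∈ singularPoints Q := by
  refine ⟨finrank_span_singleton hv, fun z hz => ?_⟩
  obtain ⟨t, rfl⟩ := mem_span_singleton.mp hz
  rw [QuadraticMap.map_smul, hQv, smul_zero]

theorem mem_of_singularPoints_le_eq_singleton {x l : Submodule K V}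
    (hl : {p | p ∈ singularPoints Q ∧ p ≤ l} = {x}) {u : V} (hu : u ∈ l) (hQu : Q u = 0) :
    u ∈ x := by
  rcases eq_or_ne u 0 with rfl | hu0
  · exact zero_mem x
  have hmem : K ∙ u ∈ {p | p ∈ singularPoints Q ∧ p ≤ l} :=
    ⟨span_singleton_mem_singularPoints hu0 hQu, (span_singleton_le_iff_mem u l).2 hu⟩
  rw [hl, Set.mem_singleton_iff] at hmem
  exact hmem ▸ mem_span_singleton_self u

theorem polar_eq_zero_of_singular_mem_span {l : Submodule K V} {v w : V} (hQv : Q v = 0)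
    (hvl : v ∈ l) (hl : ∀ u ∈ l, Q u = 0 → u ∈ K ∙ v) (hw : w ∈ l) : polar Q v w = 0 := by
  by_contra hc
  -- otherwise `w - (Q w / polar Q v w) • v` is a singular vector of `l` off the point `v`
  set u := w - (Q w / polar Q v w) • v
  have hQu : Q u = 0 := by
    rw [show u = w + (-(Q w / polar Q v w)) • v by simp [u, sub_eq_add_neg],
      QuadraticMap.map_add (⇑Q), QuadraticMap.map_smul, hQv, polar_smul_right, polar_comm _ w v]
    simp [hc]
  obtain ⟨t, ht⟩ := mem_span_singleton.mp (hl u (sub_mem hw (smul_mem _ _ hvl)) hQu)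
  have hvu : polar Q v u = polar Q v w := by
    simp [u, polar_sub_right, polar_smul_right, polar_self, hQv]
  rw [← ht, polar_smul_right, polar_self, hQv] at hvu
  simp only [smul_zero] at hvu
  exact hc hvu.symm

theorem le_ker_polarBilin_of_tangent {l : Submodule K V} {v : V} (hQv : Q v = 0)
    (hl : {p | p ∈ singularPoints Q ∧ p ≤ l} = {K ∙ v}) :
    l ≤ LinearMap.ker (polarBilin Q v) := by
  have hvl : K ∙ v ≤ l := by
    have hmem : K ∙ v ∈ {p | p ∈ singularPoints Q ∧ p ≤ l} := by rw [hl]; rfl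
    exact hmem.2
  intro w hw
  rw [LinearMap.mem_ker, polarBilin_apply_apply]
  exact polar_eq_zero_of_singular_mem_span hQv (hvl (mem_span_singleton_self v))
    (fun u hu hQu => mem_of_singularPoints_le_eq_singleton hl hu hQu) hw

theorem mem_span_of_polar_eq_zero (hmax : ∀ W, TotSingQ Q W → finrank K W ≤ 1) {v w : V}
    (hv : v ≠ 0) (hQv : Q v = 0) (hQw : Q w = 0) (hvw : polar Q v w = 0) : w ∈ K ∙ v := by
  have hsing : TotSingQ Q (span K {v, w}) := by
    intro z hz
    obtain ⟨a, b, rfl⟩ := mem_span_pair.mp hz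
    rw [QuadraticMap.map_add (⇑Q), QuadraticMap.map_smul, QuadraticMap.map_smul, polar_smul_left,
      polar_smul_right, hQv, hQw, hvw]
    simp
  have := Module.Finite.span_of_finite K (Set.toFinite {v, w})
  have hspan : K ∙ v = span K {v, w} :=
    eq_of_le_of_finrank_le (span_mono (by simp))
      (by rw [finrank_span_singleton hv]; exact hmax _ hsing)
  exact hspan ▸ subset_span (by simp)

theorem singularPoints_le_ker_polarBilin (hmax : ∀ W, TotSingQ Q W → finrank K W ≤ 1) {v : V}
    (hv : v ≠ 0) (hQv : Q v = 0) :
    {p | p ∈ singularPoints Q ∧ p ≤ LinearMap.ker (polarBilin Q v)} = {K ∙ v} := by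
  ext p
  simp only [Set.mem_ofPred_eq, Set.mem_singleton_iff]
  constructor
  · rintro ⟨⟨hp1, hps⟩, hpT⟩
    obtain ⟨w, hw0, rfl⟩ := exists_ne_zero_eq_span_singleton hp1
    have hwv : w ∈ K ∙ v := by
      refine mem_span_of_polar_eq_zero hmax hv hQv (hps w (mem_span_singleton_self w)) ?_
      simpa using hpT (mem_span_singleton_self w)
    exact eq_of_le_of_finrank_le ((span_singleton_le_iff_mem w _).2 hwv)
      (by rw [hp1, finrank_span_singleton hv])
  · rintro rfl
    refine ⟨span_singleton_mem_singularPoints hv hQv, fun z hz => ?_⟩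
    obtain ⟨t, rfl⟩ := mem_span_singleton.mp hz
    simp [polar_self, hQv]

theorem finrank_ker_polarBilin [FiniteDimensional K V] (hnd : QuadNondeg Q) {v : V}
    (hv : v ≠ 0) (hQv : Q v = 0) :
    finrank K (LinearMap.ker (polarBilin Q v)) + 1 = finrank K V := by
  refine Module.Dual.finrank_ker_add_one_of_ne_zero fun h => hv (hnd v hQv fun w => ?_)
  simpa using LinearMap.congr_fun h w

theorem eq_ker_polarBilin_of_tangent_lines [FiniteDimensional K V] (hV : finrank K V = 4)
    (hnd : QuadNondeg Q) {v : V} (hv : v ≠ 0) (hQv : Q v = 0) {π l l' : Submodule K V}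
    (hπ : finrank K π = 3) (hl : finrank K l = 2) (hl' : finrank K l' = 2) (hll' : l ≠ l')
    (hlπ : l ≤ π) (hl'π : l' ≤ π) (hlT : l ≤ LinearMap.ker (polarBilin Q v))
    (hl'T : l' ≤ LinearMap.ker (polarBilin Q v)) :
    π = LinearMap.ker (polarBilin Q v) := by
  have hsup := sup_eq_of_ne_of_finrank_eq_succ hl hl' hπ hlπ hl'π hll'
  have hker := finrank_ker_polarBilin hnd hv hQv
  rw [← hsup]
  exact eq_of_le_of_finrank_le (sup_le hlT hl'T) (by rw [hsup]; omega)

end Quadric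

section Klein

variable {K V W : Type*} [Field K] [AddCommGroup V] [Module K V] [AddCommGroup W] [Module K W]
  {Qk : QuadraticForm K W} {κ : Submodule K V → Submodule K W}

def MapsLinesOntoSingularPoints (Qk : QuadraticForm K W) (κ : Submodule K V → Submodule K W) :
    Prop :=
  ∀ p : Submodule K W, finrank K p = 1 → TotSingQ Qk p →
    ∃ l : Submodule K V, finrank K l = 2 ∧ κ l = p

def IsTangentPencilImage (κ : Submodule K V → Submodule K W) (E : Set (Submodule K V))
    (x : Submodule K V) (lq : Submodule K W) : Prop :=
  ∀ l : Submodule K V, finrank K l = 2 →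
    ((x ≤ l ∧ {p | p ∈ E ∧ p ≤ l} = {x}) ↔ κ l ≤ lq)

theorem MapsLinesOntoSingularPoints.exists_eq_span_singleton (hκ : MapsLinesOntoSingularPoints Qk κ)
    {A : Submodule K W} (hA : TotSingQ Qk A) {u : W} (hu : u ∈ A) (hu0 : u ≠ 0) :
    ∃ l : Submodule K V, finrank K l = 2 ∧ κ l = K ∙ u ∧ κ l ≤ A := by
  have huA : K ∙ u ≤ A := (span_singleton_le_iff_mem u A).2 hu
  obtain ⟨l, hl, hκl⟩ := hκ (K ∙ u) (finrank_span_singleton hu0) fun z hz => hA z (huA hz)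
  exact ⟨l, hl, hκl, hκl ▸ huA⟩

theorem MapsLinesOntoSingularPoints.exists_ne_le (hκ : MapsLinesOntoSingularPoints Qk κ)
    {A : Submodule K W} (hA2 : finrank K A = 2) (hA : TotSingQ Qk A) :
    ∃ l l' : Submodule K V, finrank K l = 2 ∧ finrank K l' = 2 ∧ l ≠ l' ∧ κ l ≤ A ∧ κ l' ≤ A := by
  obtain ⟨u, hu, u', hu', hu0, hu'0, hne⟩ := exists_span_singleton_ne hA2
  obtain ⟨l, hl, hκl, hlA⟩ := hκ.exists_eq_span_singleton hA hu hu0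
  obtain ⟨l', hl', hκl', hl'A⟩ := hκ.exists_eq_span_singleton hA hu' hu'0
  exact ⟨l, l', hl, hl', fun h => hne (by rw [← hκl, ← hκl', h]), hlA, hl'A⟩

theorem IsTangentPencilImage.le (hκ : MapsLinesOntoSingularPoints Qk κ) {E : Set (Submodule K V)}
    {x : Submodule K V} {A B : Submodule K W} (hA : TotSingQ Qk A)
    (hpA : IsTangentPencilImage κ E x A) (hpB : IsTangentPencilImage κ E x B) : A ≤ B := by
  intro u hu
  rcases eq_or_ne u 0 with rfl | hu0
  · exact zero_mem B
  obtain ⟨l, hl, hκl, hlA⟩ := hκ.exists_eq_span_singleton hA hu hu0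
  exact (hpB l hl).1 ((hpA l hl).2 hlA) (hκl ▸ mem_span_singleton_self u)

variable [FiniteDimensional K V]

theorem IsTangentPencilImage.eq_of_le_latin (hκ : MapsLinesOntoSingularPoints Qk κ)
    {E : Set (Submodule K V)} {x P : Submodule K V} {lq G : Submodule K W}
    (hp : IsTangentPencilImage κ E x lq) (hx : finrank K x = 1) (hP : finrank K P = 1)
    (hlq2 : finrank K lq = 2) (hlq : TotSingQ Qk lq) (hlqG : lq ≤ G)
    (hG : ∀ l : Submodule K V, finrank K l = 2 → (P ≤ l ↔ κ l ≤ G)) : x = P := by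
  obtain ⟨l, l', hl, hl', hne, hκl, hκl'⟩ := hκ.exists_ne_le hlq2 hlq
  by_contra hxP
  have h := sup_eq_of_ne_of_finrank_eq_succ hx hP hl ((hp l hl).2 hκl).1
    ((hG l hl).2 (hκl.trans hlqG)) hxP
  have h' := sup_eq_of_ne_of_finrank_eq_succ hx hP hl' ((hp l' hl').2 hκl').1
    ((hG l' hl').2 (hκl'.trans hlqG)) hxP
  exact hne (h.symm.trans h')

theorem IsTangentPencilImage.tangent_of_le_greek (hκ : MapsLinesOntoSingularPoints Qk κ)
    (hV : finrank K V = 4) {E : Set (Submodule K V)} (hE : IsEllipticQuadric E)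
    {x π : Submodule K V} {lq G : Submodule K W} (hx : x ∈ E)
    (hp : IsTangentPencilImage κ E x lq) (hlq2 : finrank K lq = 2) (hlq : TotSingQ Qk lq)
    (hlqG : lq ≤ G) (hπ : finrank K π = 3)
    (hG : ∀ l : Submodule K V, finrank K l = 2 → (l ≤ π ↔ κ l ≤ G)) :
    {p | p ∈ E ∧ p ≤ π} = {x} := by
  obtain ⟨Q, hnd, hmax, rfl⟩ := hE
  obtain ⟨v, hv, rfl⟩ := exists_ne_zero_eq_span_singleton hx.1
  have hQv : Q v = 0 := hx.2 v (mem_span_singleton_self v)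
  obtain ⟨l, l', hl, hl', hne, hκl, hκl'⟩ := hκ.exists_ne_le hlq2 hlq
  rw [eq_ker_polarBilin_of_tangent_lines hV hnd hv hQv hπ hl hl' hne
    ((hG l hl).2 (hκl.trans hlqG)) ((hG l' hl').2 (hκl'.trans hlqG))
    (le_ker_polarBilin_of_tangent hQv ((hp l hl).2 hκl).2)
    (le_ker_polarBilin_of_tangent hQv ((hp l' hl').2 hκl').2)]
  exact singularPoints_le_ker_polarBilin hmax.2 hv hQv

end Klein

theorem klein_one_systems_no_common_plane_general (F : Type) [Field F]
    (q : ℕ)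
    (Qk : QuadraticForm F (Fin 6 → F))
    (κ : Submodule F (Fin 4 → F) → Submodule F (Fin 6 → F))
    (hκsurj : ∀ p : Submodule F (Fin 6 → F), finrank F ↥p = 1 → TotSingQ Qk p →
      ∃ l : Submodule F (Fin 4 → F), finrank F ↥l = 2 ∧ κ l = p)
    (hκall : ∀ G : Submodule F (Fin 6 → F), TotSingQ Qk G → finrank F ↥G = 3 →
      (∃ P : Submodule F (Fin 4 → F), finrank F ↥P = 1 ∧
        ∀ l : Submodule F (Fin 4 → F), finrank F ↥l = 2 → (P ≤ l ↔ κ l ≤ G)) ∨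
      (∃ π : Submodule F (Fin 4 → F), finrank F ↥π = 3 ∧
        ∀ l : Submodule F (Fin 4 → F), finrank F ↥l = 2 → (l ≤ π ↔ κ l ≤ G)))
    (E : Fin (q + 1) → Set (Submodule F (Fin 4 → F)))
    (hell : ∀ i, ∃ Qe : QuadraticForm F (Fin 4 → F), QuadNondeg Qe ∧
      MaxIsoDim (TotSingQ Qe) 1 ∧ E i = {p : Submodule F (Fin 4 → F) | finrank F ↥p = 1 ∧ TotSingQ Qe p})
    (hpart : ∀ p : Submodule F (Fin 4 → F), finrank F ↥p = 1 → ∃! i, p ∈ E i)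
    (htang : ∀ π : Submodule F (Fin 4 → F), finrank F ↥π = 3 → ∀ i j, i ≠ j →
      ¬ ({p | p ∈ E i ∧ p ≤ π}.ncard = 1 ∧ {p | p ∈ E j ∧ p ≤ π}.ncard = 1))
    (S : Fin (q + 1) → Set (Submodule F (Fin 6 → F)))
    (hS : ∀ i, S i = {lq : Submodule F (Fin 6 → F) |
      finrank F ↥lq = 2 ∧ TotSingQ Qk lq ∧
      ∃ x ∈ E i, ∀ l : Submodule F (Fin 4 → F), finrank F ↥l = 2 →
        ((x ≤ l ∧ {p | p ∈ E i ∧ p ≤ l} = {x}) ↔ κ l ≤ lq)}) :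
    ∀ G : Submodule F (Fin 6 → F), TotSingQ Qk G → finrank F ↥G = 3 →
      ∀ l₁ ∈ ⋃ i, S i, ∀ l₂ ∈ ⋃ i, S i, l₁ ≤ G → l₂ ≤ G → l₁ = l₂ := by
  have hκ : MapsLinesOntoSingularPoints Qk κ := hκsurj
  have hE : ∀ i, IsEllipticQuadric (E i) := hell
  have hV : finrank F (Fin 4 → F) = 4 := Module.finrank_fin_fun F
  intro G hG hG3 l₁ hl₁ l₂ hl₂ h₁G h₂G
  simp only [Set.mem_iUnion, hS, Set.mem_ofPred_eq] at hl₁ hl₂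
  obtain ⟨i, h₁2, h₁s, x₁, hx₁, hp₁⟩ := hl₁
  obtain ⟨j, h₂2, h₂s, x₂, hx₂, hp₂⟩ := hl₂
  obtain ⟨rfl, rfl⟩ : i = j ∧ x₁ = x₂ := by
    rcases hκall G hG hG3 with ⟨P, hP, hGP⟩ | ⟨π, hπ, hGπ⟩
    · have e₁ := IsTangentPencilImage.eq_of_le_latin hκ hp₁ ((hE i).finrank_eq_one hx₁) hP
        h₁2 h₁s h₁G hGP
      have e₂ := IsTangentPencilImage.eq_of_le_latin hκ hp₂ ((hE j).finrank_eq_one hx₂) hP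
        h₂2 h₂s h₂G hGP
      exact ⟨(hpart P hP).unique (e₁ ▸ hx₁) (e₂ ▸ hx₂), e₁.trans e₂.symm⟩
    · have e₁ := IsTangentPencilImage.tangent_of_le_greek hκ hV (hE i) hx₁ hp₁ h₁2 h₁s h₁G hπ hGπ
      have e₂ := IsTangentPencilImage.tangent_of_le_greek hκ hV (hE j) hx₂ hp₂ h₂2 h₂s h₂G hπ hGπ
      obtain rfl : i = j := by
        by_contra hij
        exact htang π hπ i j hij ⟨by rw [e₁, Set.ncard_singleton], by rw [e₂, Set.ncard_singleton]⟩
      exact ⟨rfl, Set.singleton_eq_singleton_iff.mp (e₁.symm.trans e₂)⟩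
  exact le_antisymm (IsTangentPencilImage.le hκ h₁s hp₁ hp₂)
    (IsTangentPencilImage.le hκ h₂s hp₂ hp₁)

/-- Let `q` be an odd prime power and let `F = {E₀, …, E_q}` be a
partition of the point set of `PG(3,q)` into `q+1` pairwise disjoint elliptic quadrics such
that no plane of `PG(3,q)` is tangent to two distinct members of the partition. The Klein
correspondence `κ` is a bijection from the lines of `PG(3,q)` onto the points of the Klein
quadric `Q⁺(5,q)` mapping pencils of lines (lines through a fixed point) onto the point
sets of the Latin planes and ruled planes (lines inside a fixed plane) onto the point sets
of the Greek planes, and every generator of `Q⁺(5,q)` arises in this way. For `0 ≤ i ≤ q`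
let `S i` be the set of lines of `Q⁺(5,q)` corresponding, under `κ`, to the pencils of
tangent lines of `E i` at its points. Then no plane (generator) of `Q⁺(5,q)` contains two
distinct lines of `⋃ i, S i`. -/
theorem klein_one_systems_no_common_plane (F : Type) [Field F] [Fintype F]
    (q : ℕ) (hq : q = Fintype.card F) (hodd : Odd q)
    (Qk : QuadraticForm F (Fin 6 → F)) (hQk : QuadNondeg Qk)
    (hWk : MaxIsoDim (TotSingQ Qk) 3)
    (κ : Submodule F (Fin 4 → F) → Submodule F (Fin 6 → F))
    (hκpt : ∀ l : Submodule F (Fin 4 → F), finrank F ↥l = 2 →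
      finrank F ↥(κ l) = 1 ∧ TotSingQ Qk (κ l))
    (hκinj : ∀ l l' : Submodule F (Fin 4 → F), finrank F ↥l = 2 → finrank F ↥l' = 2 →
      κ l = κ l' → l = l')
    (hκsurj : ∀ p : Submodule F (Fin 6 → F), finrank F ↥p = 1 → TotSingQ Qk p →
      ∃ l : Submodule F (Fin 4 → F), finrank F ↥l = 2 ∧ κ l = p)
    (hκlatin : ∀ P : Submodule F (Fin 4 → F), finrank F ↥P = 1 →
      ∃ G : Submodule F (Fin 6 → F), TotSingQ Qk G ∧ finrank F ↥G = 3 ∧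
        ∀ l : Submodule F (Fin 4 → F), finrank F ↥l = 2 → (P ≤ l ↔ κ l ≤ G))
    (hκgreek : ∀ π : Submodule F (Fin 4 → F), finrank F ↥π = 3 →
      ∃ G : Submodule F (Fin 6 → F), TotSingQ Qk G ∧ finrank F ↥G = 3 ∧
        ∀ l : Submodule F (Fin 4 → F), finrank F ↥l = 2 → (l ≤ π ↔ κ l ≤ G))
    (hκall : ∀ G : Submodule F (Fin 6 → F), TotSingQ Qk G → finrank F ↥G = 3 →
      (∃ P : Submodule F (Fin 4 → F), finrank F ↥P = 1 ∧
        ∀ l : Submodule F (Fin 4 → F), finrank F ↥l = 2 → (P ≤ l ↔ κ l ≤ G)) ∨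
      (∃ π : Submodule F (Fin 4 → F), finrank F ↥π = 3 ∧
        ∀ l : Submodule F (Fin 4 → F), finrank F ↥l = 2 → (l ≤ π ↔ κ l ≤ G)))
    (E : Fin (q + 1) → Set (Submodule F (Fin 4 → F)))
    (hell : ∀ i, ∃ Qe : QuadraticForm F (Fin 4 → F), QuadNondeg Qe ∧
      MaxIsoDim (TotSingQ Qe) 1 ∧ E i = {p : Submodule F (Fin 4 → F) | finrank F ↥p = 1 ∧ TotSingQ Qe p})
    (hpart : ∀ p : Submodule F (Fin 4 → F), finrank F ↥p = 1 → ∃! i, p ∈ E i)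
    (htang : ∀ π : Submodule F (Fin 4 → F), finrank F ↥π = 3 → ∀ i j, i ≠ j →
      ¬ ({p | p ∈ E i ∧ p ≤ π}.ncard = 1 ∧ {p | p ∈ E j ∧ p ≤ π}.ncard = 1))
    (S : Fin (q + 1) → Set (Submodule F (Fin 6 → F)))
    (hS : ∀ i, S i = {lq : Submodule F (Fin 6 → F) |
      finrank F ↥lq = 2 ∧ TotSingQ Qk lq ∧
      ∃ x ∈ E i, ∀ l : Submodule F (Fin 4 → F), finrank F ↥l = 2 →
        ((x ≤ l ∧ {p | p ∈ E i ∧ p ≤ l} = {x}) ↔ κ l ≤ lq)}) :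
    ∀ G : Submodule F (Fin 6 → F), TotSingQ Qk G → finrank F ↥G = 3 →
      ∀ l₁ ∈ ⋃ i, S i, ∀ l₂ ∈ ⋃ i, S i, l₁ ≤ G → l₂ ≤ G → l₁ = l₂ :=
  klein_one_systems_no_common_plane_general F q Qk κ hκsurj hκall E hell hpart htang S hS
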